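/- For K+1 nonnegative reals σ_0, σ_1, ..., σ_K with σ_0 the value being removed and σ'_0 ∈ [0, σ_0] its replacement, and z = Σ_{k=1}^K e^{σ_k}, the following holds when all σ-values lie in [0, 1/β] and σ'_0 ≥ 0: (e^{σ_0}/(e^{σ_0}+z))·log(e^{σ_0}+z) ≥ c(β,K)·log((e^{σ_0}+z)/(1+z)), where c(β,K) = ((b+1)log(b+K))/((b+K)(log(b+K)−log K)) with b = e^{1/β}−1, assuming z ≥ K−1. -/

import Mathlib

/-!
Put `x = e^{σ₀} - 1 ∈ [0, b]` and `y = 1 + z ≥ K`; the claim becomes `c(β,K) ≤ f(x, y)` for the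
paper's `f = smoothnessRatio`, and `c(β,K) = f(b, K)`. In `y`, `f(x, ·)` increases: its numerator
`(x+1) log(x+y)` increases and its denominator `(x+y) log((x+y)/y)` decreases. In `x`, `f(·, K)`
decreases: with `u = log((x+K)/K)` the numerator of its derivative is
`(K-1)(u² + u log K + log K) - K log K · e^u`, which is nonpositive by the cubic Taylor bound for
`e^u` combined with `log K ≥ 2(K-1)/(K+1)`.
-/

open Real Set

theorem two_mul_sub_one_le_add_one_mul_log {c : ℝ} (hc : 1 ≤ c) :
    2 * (c - 1) ≤ (c + 1) * log c := by
  rcases hc.eq_or_lt with rfl | hc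
  · simp
  -- the first term of the series `log (1 + a⁻¹) = 2 ∑ (2a+1)^{-(2k+1)}/(2k+1)` at `a = (c-1)⁻¹`
  have hsum := hasSum_log_one_add_inv (inv_pos.2 (sub_pos.2 hc))
  have hfirst := le_hasSum hsum 0 fun k _ => by positivity
  rw [inv_inv, add_sub_cancel] at hfirst
  have hbase : 1 / (2 * (c - 1)⁻¹ + 1) = (c - 1) / (c + 1) := by
    field_simp; ring
  simp only [CharP.cast_eq_zero, mul_zero, zero_add, div_one, mul_one, pow_one, hbase] at hfirst
  rw [mul_div_assoc', div_le_iff₀ (by linarith)] at hfirst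
  linarith

theorem sub_one_mul_le_mul_log_mul_exp {c u : ℝ} (hc : 1 ≤ c) (hu : 0 ≤ u) :
    (c - 1) * (u ^ 2 + log c * u + log c) ≤ c * log c * exp u := by
  have hlog := two_mul_sub_one_le_add_one_mul_log hc
  have hl : 0 ≤ log c := log_nonneg hc
  have hexp : 1 + u + u ^ 2 / 2 + u ^ 3 / 6 ≤ exp u := by
    have h := sum_le_exp_of_nonneg hu 4
    simp only [Finset.sum_range_succ, Finset.sum_range_zero, Nat.factorial] at h
    norm_num at h
    linarith
  -- `hlog` bounds the `u²` coefficient below by `-log c / 2`, and `1 + u - u²/2 + u³/6 > 0`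
  linarith [mul_le_mul_of_nonneg_left hexp (mul_nonneg (by linarith : (0:ℝ) ≤ c) hl),
    mul_le_mul_of_nonneg_right hlog (sq_nonneg u),
    mul_nonneg (mul_nonneg hl hu) (sq_nonneg (u - 3 / 2)),
    mul_nonneg (mul_nonneg hl (pow_nonneg hu 3)) (by linarith : (0:ℝ) ≤ c - 1),
    mul_nonneg hl hu]

theorem sub_one_mul_log_mul_log_sub_le {c x : ℝ} (hc : 1 ≤ c) (hx : 0 ≤ x) :
    (c - 1) * log (x + c) * (log (x + c) - log c) ≤ (x + 1) * log c := by
  have hc0 : 0 < c := by linarith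
  set u := log (x + c) - log c
  have hu : 0 ≤ u := sub_nonneg.2 (log_le_log hc0 (by linarith))
  have hexp : c * exp u = x + c := by
    rw [exp_sub, exp_log (by linarith), exp_log hc0]
    field_simp
  have hpoly := sub_one_mul_le_mul_log_mul_exp hc hu
  have hL : log (x + c) = u + log c := by ring
  rw [mul_comm c, mul_assoc, hexp] at hpoly
  rw [hL]
  linarith

noncomputable def smoothnessRatio (x y : ℝ) : ℝ :=
  (x + 1) * log (x + y) / ((x + y) * (log (x + y) - log y))

theorem antitoneOn_smoothnessRatio_left {c : ℝ} (hc : 1 ≤ c) :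
    AntitoneOn (fun x => smoothnessRatio x c) (Ioi 0) := by
  have hder : ∀ x ∈ Ioi (0 : ℝ), HasDerivAt (fun x => smoothnessRatio x c)
      (((c - 1) * log (x + c) * (log (x + c) - log c) - (x + 1) * log c) /
        ((x + c) * (log (x + c) - log c)) ^ 2) x := by
    intro x (hx : 0 < x)
    have hxc : 0 < x + c := by linarith
    have hD : 0 < (x + c) * (log (x + c) - log c) :=
      mul_pos hxc (sub_pos.2 (log_lt_log (by linarith) (by linarith)))
    have hshift := (hasDerivAt_id' x).add_const c
    have hlog := hshift.log hxc.ne'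
    have hN := ((hasDerivAt_id' x).add_const 1).fun_mul hlog
    have hD' := hshift.fun_mul (hlog.sub_const (log c))
    refine (hN.fun_div hD' hD.ne').congr_deriv ?_
    congr 1
    field_simp
    ring
  refine antitoneOn_of_deriv_nonpos (convex_Ioi 0)
    (fun x hx => (hder x hx).continuousAt.continuousWithinAt) ?_ ?_
  · rw [interior_Ioi]
    exact fun x hx => (hder x hx).differentiableAt.differentiableWithinAt
  · rw [interior_Ioi]
    intro x hx
    rw [(hder x hx).deriv]
    exact div_nonpos_of_nonpos_of_nonneg
      (sub_nonpos.2 (sub_one_mul_log_mul_log_sub_le hc (le_of_lt hx))) (sq_nonneg _)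

theorem antitoneOn_mul_log_sub_log {x : ℝ} (hx : 0 ≤ x) :
    AntitoneOn (fun y => (x + y) * (log (x + y) - log y)) (Ioi 0) := by
  have hder : ∀ y ∈ Ioi (0 : ℝ), HasDerivAt (fun y => (x + y) * (log (x + y) - log y))
      (log ((x + y) / y) - x / y) y := by
    intro y (hy : 0 < y)
    have hxy : 0 < x + y := by linarith
    have hshift := (hasDerivAt_id' y).const_add x
    have h := hshift.fun_mul ((hshift.log hxy.ne').fun_sub (hasDerivAt_log hy.ne'))
    refine h.congr_deriv ?_
    rw [log_div hxy.ne' hy.ne']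
    field_simp
    ring
  refine antitoneOn_of_deriv_nonpos (convex_Ioi 0)
    (fun y hy => (hder y hy).continuousAt.continuousWithinAt) ?_ ?_
  · rw [interior_Ioi]
    exact fun y hy => (hder y hy).differentiableAt.differentiableWithinAt
  · rw [interior_Ioi]
    intro y (hy : 0 < y)
    rw [(hder y hy).deriv, sub_nonpos]
    calc log ((x + y) / y) ≤ (x + y) / y - 1 := log_le_sub_one_of_pos (by positivity)
      _ = x / y := by field_simp; ring

theorem smoothnessRatio_le_smoothnessRatio_right {c x y : ℝ} (hc : 1 ≤ c) (hx : 0 < x)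
    (hcy : c ≤ y) : smoothnessRatio x c ≤ smoothnessRatio x y := by
  have hy : 0 < y := by linarith
  have hlog : log (x + c) ≤ log (x + y) := log_le_log (by linarith) (by linarith)
  refine div_le_div₀ (mul_nonneg (by linarith) (log_nonneg (by linarith)))
    (mul_le_mul_of_nonneg_left hlog (by linarith))
    (mul_pos (by linarith) (sub_pos.2 (log_lt_log hy (by linarith))))
    (antitoneOn_mul_log_sub_log hx.le (by simp only [mem_Ioi]; linarith) hy hcy)

theorem smoothnessRatio_mul_log_div_le {b c x y : ℝ} (hc : 1 ≤ c) (hx : 0 ≤ x) (hxb : x ≤ b)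
    (hcy : c ≤ y) : smoothnessRatio b c * log ((x + y) / y) ≤ (x + 1) / (x + y) * log (x + y) := by
  have hy : 0 < y := by linarith
  rcases hx.eq_or_lt with rfl | hx
  · rw [zero_add, div_self hy.ne', log_one, mul_zero]
    exact mul_nonneg (by positivity) (log_nonneg (by linarith))
  have hratio : smoothnessRatio b c ≤ smoothnessRatio x y :=
    (antitoneOn_smoothnessRatio_left hc hx (hx.trans_le hxb) hxb).trans
      (smoothnessRatio_le_smoothnessRatio_right hc hx hcy)
  have hgap : 0 < log (x + y) - log y := sub_pos.2 (log_lt_log hy (by linarith))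
  calc smoothnessRatio b c * log ((x + y) / y)
      ≤ smoothnessRatio x y * (log (x + y) - log y) := by
        rw [log_div (by linarith) hy.ne']
        exact mul_le_mul_of_nonneg_right hratio hgap.le
    _ = (x + 1) / (x + y) * log (x + y) := by
        unfold smoothnessRatio
        field_simp

theorem stmt9_general (β : ℝ) (K : ℕ) (hK : 1 ≤ K)
    (σ₀ : ℝ) (hσ₀ : σ₀ ∈ Set.Icc 0 (1 / β)) (z : ℝ) (hz : (K : ℝ) - 1 ≤ z) :
    (Real.exp σ₀ / (Real.exp σ₀ + z)) * Real.log (Real.exp σ₀ + z) ≥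
      (((Real.exp (1 / β) - 1 + 1) * Real.log (Real.exp (1 / β) - 1 + K)) /
          ((Real.exp (1 / β) - 1 + K) *
            (Real.log (Real.exp (1 / β) - 1 + K) - Real.log K))) *
        Real.log ((Real.exp σ₀ + z) / (1 + z)) := by
  obtain ⟨hσ₀_nonneg, hσ₀_le⟩ := hσ₀
  have h := smoothnessRatio_mul_log_div_le (b := exp (1 / β) - 1) (c := K)
    (x := exp σ₀ - 1) (y := 1 + z)
    (by exact_mod_cast hK) (by linarith [one_le_exp hσ₀_nonneg])
    (by linarith [exp_le_exp.2 hσ₀_le]) (by linarith)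
  rwa [sub_add_cancel, show exp σ₀ - 1 + (1 + z) = exp σ₀ + z by ring] at h

/-- Per-user smoothness inequality: for `β > 0`, integer `K ≥ 1`, `σ₀ ∈ [0, 1/β]` and
`z ≥ K − 1` (e.g. `z = Σ_{k=1}^K e^{σ_k}` with all `σ_k ∈ [0,1/β]`),
`(e^{σ₀}/(e^{σ₀}+z))·log(e^{σ₀}+z) ≥ c(β,K)·log((e^{σ₀}+z)/(1+z))`,
where `c(β,K) = ((b+1)log(b+K))/((b+K)(log(b+K)−log K))` and `b = e^{1/β}−1`. -/
theorem stmt9 (β : ℝ) (hβ : 0 < β) (K : ℕ) (hK : 1 ≤ K)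
    (σ₀ : ℝ) (hσ₀ : σ₀ ∈ Set.Icc 0 (1 / β)) (z : ℝ) (hz : (K : ℝ) - 1 ≤ z) :
    (Real.exp σ₀ / (Real.exp σ₀ + z)) * Real.log (Real.exp σ₀ + z) ≥
      (((Real.exp (1 / β) - 1 + 1) * Real.log (Real.exp (1 / β) - 1 + K)) /
          ((Real.exp (1 / β) - 1 + K) *
            (Real.log (Real.exp (1 / β) - 1 + K) - Real.log K))) *
        Real.log ((Real.exp σ₀ + z) / (1 + z)) :=
  stmt9_general β K hK σ₀ hσ₀ z hz
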